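/- Hybrid Poincaré inequality: there exists C_P > 0 depending only on α and N such that for every u = (v, a_2,...,a_{N+1}) with v ∈ H^α(0,1), one has ‖v - v̄‖²_{L²(0,1)} + Σ_{k=2}^{N+1} |a_k - v̄|² ≤ C_P E_α(u), where v̄ = ∫_0^1 v dx. -/

import Mathlib

/-
Only the interface part of the energy is needed. For `x ∈ (0, 1]` and a site
`k ∈ {2, …, N + 1}` the distance `|k - x|` lies in `[1, N + 1]`, so the interface kernel is
bounded below by `(N + 1) ^ (-|1 + 2α|)` and `∫ (a_k - v)² ≤ (N + 1) ^ |1 + 2α| · (k-th interface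
integral)`. On the unit interval `∫ (a_k - v)² = ‖v - v̄‖² + (a_k - v̄)²`, and summing this over the
`N ≥ 1` sites bounds the left-hand side.
-/

open Finset Set MeasureTheory

/-- Gagliardo (continuous–continuous) part of the hybrid energy. -/
noncomputable def Ecc (α : ℝ) (v : ℝ → ℝ) : ℝ :=
  ∫ x in Set.Ioc (0 : ℝ) 1, ∫ y in Set.Ioc (0 : ℝ) 1,
    (v x - v y) ^ 2 / |x - y| ^ (1 + 2 * α)

/-- Continuous–discrete (interface) part of the hybrid energy. -/
noncomputable def Ecd (N : ℕ) (α : ℝ) (v : ℝ → ℝ) (a : ℕ → ℝ) : ℝ :=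
  ∑ k ∈ Finset.Icc 2 (N + 1),
    ∫ x in Set.Ioc (0 : ℝ) 1, (a k - v x) ^ 2 / |(k : ℝ) - x| ^ (1 + 2 * α)

/-- Discrete–discrete part of the hybrid energy. -/
noncomputable def Edd (N : ℕ) (α : ℝ) (a : ℕ → ℝ) : ℝ :=
  ∑ i ∈ Finset.Icc 2 (N + 1), ∑ j ∈ Finset.Icc 2 (N + 1),
    if i = j then 0 else (a i - a j) ^ 2 / |(i : ℝ) - (j : ℝ)| ^ (1 + 2 * α)

open ProbabilityTheory

section Variance

variable {Ω : Type*} [MeasurableSpace Ω] {μ : Measure Ω} [IsProbabilityMeasure μ] {v : Ω → ℝ}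

theorem integral_const_sub_sq (hv : MemLp v 2 μ) (c : ℝ) :
    ∫ x, (c - v x) ^ 2 ∂μ = ∫ x, (v x - ∫ y, v y ∂μ) ^ 2 ∂μ + (c - ∫ y, v y ∂μ) ^ 2 := by
  have h := variance_eq_sub (X := fun x => c - v x) ((memLp_const c).sub hv)
  rw [variance_const_sub hv.aestronglyMeasurable, variance_eq_integral hv.aemeasurable,
    integral_sub (integrable_const c) (hv.integrable one_le_two), integral_const] at h
  simp only [Pi.pow_apply, probReal_univ, one_smul] at h
  linarith

theorem integral_sub_integral_sq_add_sum_le {ι : Type*} {s : Finset ι} (hs : s.Nonempty)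
    (hv : MemLp v 2 μ) (a : ι → ℝ) :
    ∫ x, (v x - ∫ y, v y ∂μ) ^ 2 ∂μ + ∑ k ∈ s, (a k - ∫ y, v y ∂μ) ^ 2 ≤
      ∑ k ∈ s, ∫ x, (a k - v x) ^ 2 ∂μ := by
  have hvar : 0 ≤ ∫ x, (v x - ∫ y, v y ∂μ) ^ 2 ∂μ := integral_nonneg fun _ => sq_nonneg _
  have hcard : (1 : ℝ) ≤ #s := by exact_mod_cast hs.card_pos
  simp_rw [integral_const_sub_sq hv, sum_add_distrib, sum_const, nsmul_eq_mul]
  nlinarith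

end Variance

theorem setIntegral_le_mul_setIntegral_div {α : Type*} [MeasurableSpace α] {μ : Measure α}
    {s : Set α} (hs : MeasurableSet s) {f w : α → ℝ} (hf : IntegrableOn f s μ)
    (hf0 : ∀ x ∈ s, 0 ≤ f x) (hw : AEStronglyMeasurable w (μ.restrict s)) {m M : ℝ}
    (hm : 0 < m) (hmw : ∀ x ∈ s, m ≤ w x) (hwM : ∀ x ∈ s, w x ≤ M) :
    ∫ x in s, f x ∂μ ≤ M * ∫ x in s, f x / w x ∂μ := by
  have hdiv : IntegrableOn (fun x => f x / w x) s μ := by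
    refine (hf.div_const m).mono (hf.aestronglyMeasurable.div₀ hw) ?_
    filter_upwards [ae_restrict_mem hs] with x hx
    have hw0 : 0 < w x := hm.trans_le (hmw x hx)
    rw [Real.norm_of_nonneg (div_nonneg (hf0 x hx) hw0.le),
      Real.norm_of_nonneg (div_nonneg (hf0 x hx) hm.le)]
    exact div_le_div_of_nonneg_left (hf0 x hx) hm (hmw x hx)
  rw [← integral_const_mul]
  refine setIntegral_mono_on hf (hdiv.const_mul M) hs fun x hx => ?_
  have hw0 : 0 < w x := hm.trans_le (hmw x hx)
  calc f x = w x * (f x / w x) := by field_simp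
    _ ≤ M * (f x / w x) := mul_le_mul_of_nonneg_right (hwM x hx) (div_nonneg (hf0 x hx) hw0.le)

theorem Real.rpow_le_rpow_abs_of_one_le {t R : ℝ} (ht : 1 ≤ t) (htR : t ≤ R) (p : ℝ) :
    t ^ p ≤ R ^ |p| :=
  (Real.rpow_le_rpow_of_exponent_le ht (le_abs_self p)).trans
    (Real.rpow_le_rpow (by linarith) htR (abs_nonneg p))

theorem Real.inv_rpow_abs_le_rpow_of_one_le {t R : ℝ} (ht : 1 ≤ t) (htR : t ≤ R) (p : ℝ) :
    (R ^ |p|)⁻¹ ≤ t ^ p := by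
  have h := Real.rpow_le_rpow_abs_of_one_le ht htR (-p)
  rw [abs_neg, Real.rpow_neg (by linarith)] at h
  exact inv_le_of_inv_le₀ (by positivity) h

theorem abs_natCast_sub_mem_Icc {N k : ℕ} (hk : k ∈ Finset.Icc 2 (N + 1)) {x : ℝ}
    (hx : x ∈ Ioc (0 : ℝ) 1) : |(k : ℝ) - x| ∈ Icc 1 ((N : ℝ) + 1) := by
  rw [Finset.mem_Icc] at hk
  have h2 : (2 : ℝ) ≤ k := by exact_mod_cast hk.1
  have hN : (k : ℝ) ≤ N + 1 := by exact_mod_cast hk.2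
  rw [abs_of_nonneg (by linarith [hx.2])]
  constructor <;> linarith [hx.1, hx.2]

theorem setIntegral_sq_le_mul_interface_integral {N k : ℕ} (hk : k ∈ Finset.Icc 2 (N + 1))
    (p : ℝ) {g : ℝ → ℝ} (hg : IntegrableOn (fun x => g x ^ 2) (Ioc 0 1)) :
    ∫ x in Ioc (0 : ℝ) 1, g x ^ 2 ≤
      ((N : ℝ) + 1) ^ |p| * ∫ x in Ioc (0 : ℝ) 1, g x ^ 2 / |(k : ℝ) - x| ^ p := by
  have hR : (0 : ℝ) < ((N : ℝ) + 1) ^ |p| := by positivity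
  refine setIntegral_le_mul_setIntegral_div measurableSet_Ioc hg (fun _ _ => sq_nonneg _)
    ?_ (inv_pos.2 hR) (fun x hx => ?_) (fun x hx => ?_)
  · exact (by fun_prop : Measurable fun x : ℝ => |(k : ℝ) - x| ^ p).aestronglyMeasurable
  · obtain ⟨h1, hN⟩ := abs_natCast_sub_mem_Icc hk hx
    exact Real.inv_rpow_abs_le_rpow_of_one_le h1 hN p
  · obtain ⟨h1, hN⟩ := abs_natCast_sub_mem_Icc hk hx
    exact Real.rpow_le_rpow_abs_of_one_le h1 hN p

theorem Ecc_nonneg (α : ℝ) (v : ℝ → ℝ) : 0 ≤ Ecc α v :=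
  setIntegral_nonneg measurableSet_Ioc fun _ _ =>
    setIntegral_nonneg measurableSet_Ioc fun _ _ => by positivity

theorem Ecd_nonneg (N : ℕ) (α : ℝ) (v : ℝ → ℝ) (a : ℕ → ℝ) : 0 ≤ Ecd N α v a :=
  sum_nonneg fun _ _ => setIntegral_nonneg measurableSet_Ioc fun _ _ => by positivity

theorem Edd_nonneg (N : ℕ) (α : ℝ) (a : ℕ → ℝ) : 0 ≤ Edd N α a :=
  sum_nonneg fun _ _ => sum_nonneg fun _ _ => by split_ifs <;> positivity

instance isProbabilityMeasure_restrict_Ioc_zero_one :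
    IsProbabilityMeasure (volume.restrict (Ioc (0 : ℝ) 1)) :=
  ⟨by simp [Real.volume_Ioc]⟩

theorem stmt_9_general (N : ℕ) (hN : 2 ≤ N) (α : ℝ) :
    ∃ C_P : ℝ, 0 < C_P ∧ ∀ (v : ℝ → ℝ) (a : ℕ → ℝ),
      IntegrableOn v (Set.Ioc (0 : ℝ) 1) →
      IntegrableOn (fun x => (v x) ^ 2) (Set.Ioc (0 : ℝ) 1) →
      (∫ x in Set.Ioc (0 : ℝ) 1, (v x - ∫ y in Set.Ioc (0 : ℝ) 1, v y) ^ 2) +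
          (∑ k ∈ Finset.Icc 2 (N + 1), (a k - ∫ x in Set.Ioc (0 : ℝ) 1, v x) ^ 2) ≤
        C_P * (Ecc α v + 2 * Ecd N α v a + Edd N α a) := by
  refine ⟨((N : ℝ) + 1) ^ |1 + 2 * α|, by positivity, fun v a hv hv2 => ?_⟩
  have hL2 : MemLp v 2 (volume.restrict (Ioc (0 : ℝ) 1)) :=
    (memLp_two_iff_integrable_sq hv.aestronglyMeasurable).2 hv2
  have hsites : (Finset.Icc 2 (N + 1)).Nonempty := nonempty_Icc.2 (by omega)
  calc _ ≤ ∑ k ∈ Finset.Icc 2 (N + 1), ∫ x in Ioc (0 : ℝ) 1, (a k - v x) ^ 2 :=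
        integral_sub_integral_sq_add_sum_le hsites hL2 a
    _ ≤ ∑ k ∈ Finset.Icc 2 (N + 1), ((N : ℝ) + 1) ^ |1 + 2 * α| *
          ∫ x in Ioc (0 : ℝ) 1, (a k - v x) ^ 2 / |(k : ℝ) - x| ^ (1 + 2 * α) :=
        sum_le_sum fun k hk => setIntegral_sq_le_mul_interface_integral hk _
          ((memLp_const (a k)).sub hL2).integrable_sq
    _ = ((N : ℝ) + 1) ^ |1 + 2 * α| * Ecd N α v a := by rw [Ecd, mul_sum]
    _ ≤ ((N : ℝ) + 1) ^ |1 + 2 * α| * (Ecc α v + 2 * Ecd N α v a + Edd N α a) := by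
        gcongr
        linarith [Ecc_nonneg α v, Ecd_nonneg N α v a, Edd_nonneg N α a]

/-- Hybrid Poincaré inequality: there is `C_P > 0`, depending only on `α` and `N`, with
`‖v - v̄‖²_{L²(0,1)} + Σ_k |a_k - v̄|² ≤ C_P E_α(u)`. -/
theorem stmt_9 (N : ℕ) (hN : 2 ≤ N) (α : ℝ) (hα : 0 < α) (hα1 : α < 1) :
    ∃ C_P : ℝ, 0 < C_P ∧ ∀ (v : ℝ → ℝ) (a : ℕ → ℝ),
      IntegrableOn v (Set.Ioc (0 : ℝ) 1) →
      IntegrableOn (fun x => (v x) ^ 2) (Set.Ioc (0 : ℝ) 1) →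
      (∫ x in Set.Ioc (0 : ℝ) 1, (v x - ∫ y in Set.Ioc (0 : ℝ) 1, v y) ^ 2) +
          (∑ k ∈ Finset.Icc 2 (N + 1), (a k - ∫ x in Set.Ioc (0 : ℝ) 1, v x) ^ 2) ≤
        C_P * (Ecc α v + 2 * Ecd N α v a + Edd N α a) :=
  stmt_9_general N hN α
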